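/- For a discounted MDP with finite state and action spaces, the expected cumulative discounted advantage of a policy π' under the value functions of policy π equals the performance difference: J_{π'} − J_π = E_{π'}[ Σ_{k=0}^{∞} γ^k A_π(S_k, a_k) ], where A_π(s,a) = q_π(s,a) − v_π(s). -/

import Mathlib

/-!
Put `E := v' - v` and `D k := ∑ s, d_k s * E s`, where `d_k` is the state distribution of `π'`
at step `k`. Averaging the advantage over `π'` gives, state by state, `E - γ P_{π'} E`, because
`q = r + γ P v` and `v'` is the fixed point `v' = r_{π'} + γ P_{π'} v'`. Since `d_{k+1} = d_k P_{π'}`,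
the `k`-th term of the series is `γ^k D k - γ^(k+1) D (k+1)`, so the series telescopes to
`D 0 = ∑ s, μ s * (v' s - v s)`. The tail vanishes because `P_{π'}` is an `ℓ¹`-contraction on distributions,
so `D` is bounded.
-/

open Finset

/-- State distribution at step `k` under policy `pol` starting from `μ`. -/
noncomputable def stateDist {S A : Type*} [Fintype S] [Fintype A]
    (P : S → A → S → ℝ) (pol : S → A → ℝ) (μ : S → ℝ) : ℕ → S → ℝ
  | 0 => μ
  | (k + 1) => fun s' => ∑ s, ∑ a, stateDist P pol μ k s * pol s a * P s a s'

def policyTransition {S A : Type*} [Fintype S] [Fintype A]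
    (P : S → A → S → ℝ) (pol : S → A → ℝ) (f : S → ℝ) (s : S) : ℝ :=
  ∑ a, pol s a * ∑ s', P s a s' * f s'

theorem tsum_sub_succ {G : Type*} [AddCommGroup G] [TopologicalSpace G] [IsTopologicalAddGroup G]
    [T2Space G] {x : ℕ → G} (hx : Summable x) : ∑' k, (x k - x (k + 1)) = x 0 := by
  rw [hx.tsum_sub ((summable_nat_add_iff 1).mpr hx), hx.tsum_eq_zero_add, add_sub_cancel_right]

theorem summable_geometric_mul_of_abs_le {γ C : ℝ} (hγ0 : 0 ≤ γ) (hγ1 : γ < 1) {D : ℕ → ℝ}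
    (hD : ∀ k, |D k| ≤ C) : Summable fun k => γ ^ k * D k := by
  refine .of_norm_bounded ((summable_geometric_of_lt_one hγ0 hγ1).mul_right C) fun k => ?_
  rw [Real.norm_eq_abs, abs_mul, abs_pow, abs_of_nonneg hγ0]
  exact mul_le_mul_of_nonneg_left (hD k) (pow_nonneg hγ0 k)

namespace stateDist

variable {S A : Type*} [Fintype S] [Fintype A] (P : S → A → S → ℝ) (pol : S → A → ℝ) (μ : S → ℝ)

theorem sum_succ_mul (k : ℕ) (f : S → ℝ) :
    ∑ s', stateDist P pol μ (k + 1) s' * f s'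
      = ∑ s, stateDist P pol μ k s * policyTransition P pol f s := by
  simp only [stateDist, policyTransition, sum_mul, mul_sum]
  rw [sum_comm]
  refine sum_congr rfl fun s _ => ?_
  rw [sum_comm]
  exact sum_congr rfl fun a _ => sum_congr rfl fun s' _ => by ring

variable {P pol}

theorem sum_abs_succ_le (hP0 : ∀ s a s', 0 ≤ P s a s') (hP1 : ∀ s a, ∑ s', P s a s' = 1)
    (hpol0 : ∀ s a, 0 ≤ pol s a) (hpol1 : ∀ s, ∑ a, pol s a = 1) (k : ℕ) :
    ∑ s', |stateDist P pol μ (k + 1) s'| ≤ ∑ s, |stateDist P pol μ k s| := by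
  calc ∑ s', |stateDist P pol μ (k + 1) s'|
      ≤ ∑ s', ∑ s, ∑ a, |stateDist P pol μ k s| * pol s a * P s a s' := by
        refine sum_le_sum fun s' _ => (abs_sum_le_sum_abs _ _).trans <|
          sum_le_sum fun s _ => (abs_sum_le_sum_abs _ _).trans_eq <| sum_congr rfl fun a _ => ?_
        rw [abs_mul, abs_mul, abs_of_nonneg (hpol0 s a), abs_of_nonneg (hP0 s a s')]
    _ = ∑ s, |stateDist P pol μ k s| := by
        rw [sum_comm]
        refine sum_congr rfl fun s _ => ?_
        rw [sum_comm]
        simp only [← mul_sum, hP1, mul_one, hpol1]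

theorem sum_abs_le (hP0 : ∀ s a s', 0 ≤ P s a s') (hP1 : ∀ s a, ∑ s', P s a s' = 1)
    (hpol0 : ∀ s a, 0 ≤ pol s a) (hpol1 : ∀ s, ∑ a, pol s a = 1) (k : ℕ) :
    ∑ s, |stateDist P pol μ k s| ≤ ∑ s, |μ s| := by
  induction k with
  | zero => rfl
  | succ k ih => exact (sum_abs_succ_le μ hP0 hP1 hpol0 hpol1 k).trans ih

theorem abs_sum_mul_le (hP0 : ∀ s a s', 0 ≤ P s a s') (hP1 : ∀ s a, ∑ s', P s a s' = 1)
    (hpol0 : ∀ s a, 0 ≤ pol s a) (hpol1 : ∀ s, ∑ a, pol s a = 1) (f : S → ℝ) (k : ℕ) :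
    |∑ s, stateDist P pol μ k s * f s| ≤ (∑ s, |μ s|) * ∑ s, |f s| :=
  calc |∑ s, stateDist P pol μ k s * f s|
      ≤ ∑ s, |stateDist P pol μ k s| * ∑ s, |f s| := by
        refine (abs_sum_le_sum_abs _ _).trans <| sum_le_sum fun s _ => ?_
        rw [abs_mul]
        exact mul_le_mul_of_nonneg_left
          (single_le_sum (fun i _ => abs_nonneg (f i)) (mem_univ s)) (abs_nonneg _)
    _ ≤ (∑ s, |μ s|) * ∑ s, |f s| := by
        rw [← sum_mul]
        exact mul_le_mul_of_nonneg_right (sum_abs_le μ hP0 hP1 hpol0 hpol1 k)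
          (sum_nonneg fun s _ => abs_nonneg _)

end stateDist

theorem sum_mul_advantage_eq {S A : Type*} [Fintype S] [Fintype A]
    {P : S → A → S → ℝ} {r : S → A → ℝ} {γ : ℝ} {pol' : S → A → ℝ}
    (hpol'1 : ∀ s, ∑ a, pol' s a = 1) {v v' : S → ℝ} {q : S → A → ℝ}
    (hv' : ∀ s, v' s = ∑ a, pol' s a * (r s a + γ * ∑ s', P s a s' * v' s'))
    (hq : ∀ s a, q s a = r s a + γ * ∑ s', P s a s' * v s') (s : S) :
    ∑ a, pol' s a * (q s a - v s)
      = (v' - v) s - γ * policyTransition P pol' (v' - v) s := by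
  have hv'_sub : (v' - v) s = ∑ a, pol' s a * (r s a + γ * ∑ s', P s a s' * v' s' - v s) := by
    simp only [Pi.sub_apply, mul_sub, sum_sub_distrib, ← sum_mul, hpol'1, one_mul, ← hv']
  rw [hv'_sub, policyTransition, mul_sum, ← sum_sub_distrib]
  refine sum_congr rfl fun a _ => ?_
  simp only [hq, Pi.sub_apply, mul_sub, sum_sub_distrib]
  ring

theorem sum_stateDist_mul_advantage_eq {S A : Type*} [Fintype S] [Fintype A]
    {P : S → A → S → ℝ} {r : S → A → ℝ} {γ : ℝ} (μ : S → ℝ) {pol' : S → A → ℝ}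
    (hpol'1 : ∀ s, ∑ a, pol' s a = 1) {v v' : S → ℝ} {q : S → A → ℝ}
    (hv' : ∀ s, v' s = ∑ a, pol' s a * (r s a + γ * ∑ s', P s a s' * v' s'))
    (hq : ∀ s a, q s a = r s a + γ * ∑ s', P s a s' * v s') (k : ℕ) :
    ∑ s, ∑ a, stateDist P pol' μ k s * pol' s a * (q s a - v s)
      = ∑ s, stateDist P pol' μ k s * (v' - v) s
        - γ * ∑ s, stateDist P pol' μ (k + 1) s * (v' - v) s :=
  calc ∑ s, ∑ a, stateDist P pol' μ k s * pol' s a * (q s a - v s)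
      = ∑ s, stateDist P pol' μ k s * ∑ a, pol' s a * (q s a - v s) := by
        simp only [mul_assoc, ← mul_sum]
    _ = ∑ s, stateDist P pol' μ k s * ((v' - v) s - γ * policyTransition P pol' (v' - v) s) := by
        simp only [sum_mul_advantage_eq hpol'1 hv' hq]
    _ = _ := by
        rw [stateDist.sum_succ_mul, mul_sum, ← sum_sub_distrib]
        simp only [mul_sub, mul_left_comm _ γ]

theorem performance_difference_general
    {S A : Type*} [Fintype S] [Fintype A]
    (P : S → A → S → ℝ) (hP0 : ∀ s a s', 0 ≤ P s a s') (hP1 : ∀ s a, ∑ s', P s a s' = 1)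
    (r : S → A → ℝ) (γ : ℝ) (hγ0 : 0 ≤ γ) (hγ1 : γ < 1)
    (μ : S → ℝ)
    (pol' : S → A → ℝ)
    (hpol'0 : ∀ s a, 0 ≤ pol' s a) (hpol'1 : ∀ s, ∑ a, pol' s a = 1)
    (v v' : S → ℝ) (q : S → A → ℝ)
    (hv' : ∀ s, v' s = ∑ a, pol' s a * (r s a + γ * ∑ s', P s a s' * v' s'))
    (hq : ∀ s a, q s a = r s a + γ * ∑ s', P s a s' * v s') :
    (∑ s, μ s * v' s) - (∑ s, μ s * v s)
      = ∑' k : ℕ, γ ^ k *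
          ∑ s, ∑ a, stateDist P pol' μ k s * pol' s a * (q s a - v s) := by
  set D : ℕ → ℝ := fun k => ∑ s, stateDist P pol' μ k s * (v' - v) s
  have hterm (k : ℕ) : γ ^ k * ∑ s, ∑ a, stateDist P pol' μ k s * pol' s a * (q s a - v s)
      = γ ^ k * D k - γ ^ (k + 1) * D (k + 1) := by
    rw [sum_stateDist_mul_advantage_eq μ hpol'1 hv' hq, pow_succ]; ring
  have hD_bdd (k : ℕ) : |D k| ≤ (∑ s, |μ s|) * ∑ s, |(v' - v) s| :=
    stateDist.abs_sum_mul_le μ hP0 hP1 hpol'0 hpol'1 _ k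
  rw [tsum_congr hterm, tsum_sub_succ (summable_geometric_mul_of_abs_le hγ0 hγ1 hD_bdd)]
  simp [D, stateDist, ← sum_sub_distrib, mul_sub]

/-- Performance difference lemma: `J_{π'} − J_π` equals the expected cumulative
discounted advantage of `π'` evaluated with the value functions of `π`. -/
theorem performance_difference
    {S A : Type*} [Fintype S] [Fintype A]
    (P : S → A → S → ℝ) (hP0 : ∀ s a s', 0 ≤ P s a s') (hP1 : ∀ s a, ∑ s', P s a s' = 1)
    (r : S → A → ℝ) (γ : ℝ) (hγ0 : 0 ≤ γ) (hγ1 : γ < 1)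
    (μ : S → ℝ) (hμ0 : ∀ s, 0 ≤ μ s) (hμ1 : ∑ s, μ s = 1)
    (pol pol' : S → A → ℝ)
    (hpol0 : ∀ s a, 0 ≤ pol s a) (hpol1 : ∀ s, ∑ a, pol s a = 1)
    (hpol'0 : ∀ s a, 0 ≤ pol' s a) (hpol'1 : ∀ s, ∑ a, pol' s a = 1)
    (v v' : S → ℝ) (q : S → A → ℝ)
    (hv : ∀ s, v s = ∑ a, pol s a * (r s a + γ * ∑ s', P s a s' * v s'))
    (hv' : ∀ s, v' s = ∑ a, pol' s a * (r s a + γ * ∑ s', P s a s' * v' s'))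
    (hq : ∀ s a, q s a = r s a + γ * ∑ s', P s a s' * v s') :
    (∑ s, μ s * v' s) - (∑ s, μ s * v s)
      = ∑' k : ℕ, γ ^ k *
          ∑ s, ∑ a, stateDist P pol' μ k s * pol' s a * (q s a - v s) :=
  performance_difference_general P hP0 hP1 r γ hγ0 hγ1 μ pol' hpol'0 hpol'1 v v' q hv' hq
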